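/- arXiv:2008.09051 — 2 statements merged into one kernel-verified Lean document; each statement's English description precedes it below -/
import Mathlib

section
/- Let X be a bigraph and let α be an odd involution of X such that no vertex x of X is adjacent to α(x). Then the automorphism group Aut(X/α) of the quotient graph is isomorphic to the subgroup of Aut(X) consisting of the even automorphisms of X that commute with α. -/
/-- The automorphism group of a simple graph, as the subgroup of the permutation group of
its vertices consisting of adjacency-preserving permutations. -/
def graphAut {V : Type*} (G : SimpleGraph V) : Subgroup (Equiv.Perm V) where
  carrier := {π | ∀ a b, G.Adj (π a) (π b) ↔ G.Adj a b}
  one_mem' := fun _ _ => Iff.rfl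
  mul_mem' := by
    intro π ρ hπ hρ a b
    simpa [Equiv.Perm.mul_apply] using (hπ (ρ a) (ρ b)).trans (hρ a b)
  inv_mem' := by
    intro π hπ a b
    have := (hπ (π⁻¹ a) (π⁻¹ b)).symm
    simpa using this

/-- The permutations preserving a 2-coloring `ε`, as a subgroup of the permutation group. -/
def evenSubgroup {V : Type*} (ε : V → Fin 2) : Subgroup (Equiv.Perm V) where
  carrier := {π | ∀ x, ε (π x) = ε x}
  one_mem' := fun _ => rfl
  mul_mem' := by
    intro π ρ hπ hρ x
    simpa [Equiv.Perm.mul_apply] using (hπ (ρ x)).trans (hρ x)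
  inv_mem' := by
    intro π hπ x
    have := hπ (π⁻¹ x)
    simpa using this.symm

/-- The setoid on vertices whose classes are the orbits `{x, α x}` of an involution `α`. -/
def orbitSetoid {V : Type*} (α : Equiv.Perm V) (hinv : ∀ x, α (α x) = x) : Setoid V where
  r x y := y = x ∨ y = α x
  iseqv := by
    refine ⟨fun x => Or.inl rfl, ?_, ?_⟩
    · rintro x y (rfl | rfl)
      · exact Or.inl rfl
      · exact Or.inr (hinv x).symm
    · rintro x y z (rfl | rfl) (rfl | rfl)
      · exact Or.inl rfl
      · exact Or.inr rfl
      · exact Or.inr rfl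
      · exact Or.inl (hinv x)

/-- The quotient graph `X/α` of a graph `X` by an involution `α` such that no vertex is
adjacent to its image: vertices are the orbits `{x, α x}`, two orbits being adjacent iff
some element of one is adjacent in `X` to some element of the other. -/
def quotGraph {V : Type*} (X : SimpleGraph V) (α : Equiv.Perm V)
    (hinv : ∀ x, α (α x) = x) (hns : ∀ x, ¬ X.Adj x (α x)) :
    SimpleGraph (Quotient (orbitSetoid α hinv)) where
  Adj a b := ∃ x y, Quotient.mk (orbitSetoid α hinv) x = a ∧
    Quotient.mk (orbitSetoid α hinv) y = b ∧ X.Adj x y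
  symm := by constructor; rintro a b ⟨x, y, hx, hy, h⟩; exact ⟨y, x, hy, hx, h.symm⟩
  loopless := by
    constructor
    rintro a ⟨x, y, hx, hy, h⟩
    rw [← hx] at hy
    rcases Quotient.exact hy with (h2 | h2)
    · subst h2; exact X.loopless.irrefl _ h
    · subst h2; exact hns y (X.symm.symm _ _ h)

/-!
An odd involution `α` pairs every vertex with one of the opposite colour, so `x ↦ ([x], ε x)`
identifies `V` with (orbits of `α`) × `Fin 2`. Transporting `σ × id` along this identification
lifts every permutation `σ` of the orbits to an even permutation of `V` commuting with `α`,
injectively, and every such permutation arises this way. Adjacency in `X/α` between orbits of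
vertices of opposite colours is adjacency in `X` (the other candidate edge joins vertices of
equal colour), so `σ` is an automorphism of `X/α` exactly when its lift is an automorphism of `X`.
-/

lemma Fin.two_eq_of_ne_of_ne {a b c : Fin 2} (hab : a ≠ b) (hbc : b ≠ c) : a = c := by
  omega

namespace orbitSetoid

variable {V : Type*} {α : Equiv.Perm V} {hinv : ∀ x, α (α x) = x}

lemma mk_eq_mk_iff {x y : V} :
    Quotient.mk (orbitSetoid α hinv) x = Quotient.mk _ y ↔ y = x ∨ y = α x :=
  Quotient.eq

lemma mk_apply_eq_mk (x : V) : Quotient.mk (orbitSetoid α hinv) (α x) = Quotient.mk _ x :=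
  (Quotient.sound (Or.inr rfl)).symm

variable {ε : V → Fin 2}

lemma eq_of_mk_eq_of_color_eq (hodd : ∀ x, ε (α x) ≠ ε x) {x y : V}
    (hxy : Quotient.mk (orbitSetoid α hinv) x = Quotient.mk _ y) (hε : ε x = ε y) : x = y := by
  rcases mk_eq_mk_iff.mp hxy with rfl | rfl
  · rfl
  · exact absurd hε.symm (hodd x)

lemma exists_mk_eq_color_eq (hodd : ∀ x, ε (α x) ≠ ε x) (x : V) (c : Fin 2) :
    ∃ y, Quotient.mk (orbitSetoid α hinv) y = Quotient.mk _ x ∧ ε y = c := by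
  by_cases hx : ε x = c
  · exact ⟨x, rfl, hx⟩
  · exact ⟨α x, mk_apply_eq_mk x, Fin.two_eq_of_ne_of_ne (hodd x) hx⟩

variable (hinv) in
noncomputable def colorEquiv (hodd : ∀ x, ε (α x) ≠ ε x) :
    V ≃ Quotient (orbitSetoid α hinv) × Fin 2 :=
  Equiv.ofBijective (fun x => (Quotient.mk _ x, ε x)) <| by
    refine ⟨fun x y hxy => eq_of_mk_eq_of_color_eq hodd (Prod.ext_iff.mp hxy).1
      (Prod.ext_iff.mp hxy).2, ?_⟩
    rintro ⟨q, c⟩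
    induction q using Quotient.ind with
    | _ x =>
      obtain ⟨y, hy, hc⟩ := exists_mk_eq_color_eq hodd x c
      exact ⟨y, Prod.ext hy hc⟩

lemma colorEquiv_apply (hodd : ∀ x, ε (α x) ≠ ε x) (x : V) :
    colorEquiv hinv hodd x = (Quotient.mk _ x, ε x) :=
  Equiv.ofBijective_apply _ _ x

variable (hinv) in
noncomputable def liftPerm (hodd : ∀ x, ε (α x) ≠ ε x) :
    Equiv.Perm (Quotient (orbitSetoid α hinv)) →* Equiv.Perm V where
  toFun σ := (colorEquiv hinv hodd).symm.permCongr (σ.prodCongr (Equiv.refl _))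
  map_one' := by ext; simp
  map_mul' σ τ := by ext; simp [Prod.map]

lemma colorEquiv_liftPerm_apply (hodd : ∀ x, ε (α x) ≠ ε x) (σ) (x : V) :
    colorEquiv hinv hodd (liftPerm hinv hodd σ x) = (σ (Quotient.mk _ x), ε x) := by
  simp [liftPerm, Equiv.permCongr_apply, colorEquiv_apply]

lemma mk_liftPerm_apply (hodd : ∀ x, ε (α x) ≠ ε x) (σ) (x : V) :
    Quotient.mk _ (liftPerm hinv hodd σ x) = σ (Quotient.mk _ x) := by
  simpa [colorEquiv_apply] using congrArg Prod.fst (colorEquiv_liftPerm_apply hodd σ x)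

lemma color_liftPerm_apply (hodd : ∀ x, ε (α x) ≠ ε x) (σ) (x : V) :
    ε (liftPerm hinv hodd σ x) = ε x := by
  simpa [colorEquiv_apply] using congrArg Prod.snd (colorEquiv_liftPerm_apply hodd σ x)

lemma liftPerm_apply_apply (hodd : ∀ x, ε (α x) ≠ ε x) (σ) (x : V) :
    liftPerm hinv hodd σ (α x) = α (liftPerm hinv hodd σ x) := by
  refine eq_of_mk_eq_of_color_eq (hinv := hinv) hodd ?_ ?_
  · rw [mk_liftPerm_apply, mk_apply_eq_mk, mk_apply_eq_mk, mk_liftPerm_apply]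
  · have hodd' := hodd (liftPerm hinv hodd σ x)
    rw [color_liftPerm_apply hodd] at hodd' ⊢
    exact Fin.two_eq_of_ne_of_ne (hodd x) hodd'.symm

lemma liftPerm_injective (hodd : ∀ x, ε (α x) ≠ ε x) :
    Function.Injective (liftPerm hinv hodd) := by
  intro σ τ h
  ext q
  induction q using Quotient.ind with
  | _ x => rw [← mk_liftPerm_apply hodd, h, mk_liftPerm_apply]

def permOfCommute (π : Equiv.Perm V) (hπ : ∀ x, π (α x) = α (π x)) :
    Equiv.Perm (Quotient (orbitSetoid α hinv)) :=
  Quotient.congr π fun x y => by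
    change y = x ∨ y = α x ↔ π y = π x ∨ π y = α (π x)
    rw [← hπ, π.injective.eq_iff, π.injective.eq_iff]

lemma range_liftPerm (hodd : ∀ x, ε (α x) ≠ ε x) :
    (liftPerm hinv hodd).range = evenSubgroup ε ⊓ Subgroup.centralizer {α} := by
  ext π
  have hcomm_iff : π ∈ Subgroup.centralizer {α} ↔ ∀ x, π (α x) = α (π x) := by
    simp only [Subgroup.mem_centralizer_singleton_iff, Equiv.Perm.ext_iff, Equiv.Perm.mul_apply]
  rw [MonoidHom.mem_range, Subgroup.mem_inf, hcomm_iff]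
  constructor
  · rintro ⟨σ, rfl⟩
    exact ⟨color_liftPerm_apply hodd σ, liftPerm_apply_apply hodd σ⟩
  · rintro ⟨heven, hcomm⟩
    refine ⟨permOfCommute π hcomm, ?_⟩
    ext x
    exact eq_of_mk_eq_of_color_eq hodd (mk_liftPerm_apply hodd _ x)
      ((color_liftPerm_apply hodd _ x).trans (heven x).symm)

end orbitSetoid

namespace quotGraph

open orbitSetoid

variable {V : Type*} {X : SimpleGraph V} {ε : V → Fin 2} {α : Equiv.Perm V}
  {hinv : ∀ x, α (α x) = x} {hns : ∀ x, ¬ X.Adj x (α x)}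

lemma adj_mk_mk_iff (haut : ∀ a b, X.Adj (α a) (α b) ↔ X.Adj a b) {a b : V} :
    (quotGraph X α hinv hns).Adj (Quotient.mk _ a) (Quotient.mk _ b) ↔
      X.Adj a b ∨ X.Adj a (α b) := by
  constructor
  · rintro ⟨x, y, hx, hy, hxy⟩
    rcases mk_eq_mk_iff.mp hx.symm with rfl | rfl <;>
      rcases mk_eq_mk_iff.mp hy.symm with rfl | rfl
    · exact Or.inl hxy
    · exact Or.inr hxy
    · exact Or.inr (by rwa [← haut, hinv])
    · exact Or.inl ((haut a b).mp hxy)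
  · rintro (h | h)
    · exact ⟨a, b, rfl, rfl, h⟩
    · exact ⟨a, α b, rfl, mk_apply_eq_mk b, h⟩

lemma adj_mk_mk_iff_of_color_ne (hbip : ∀ a b, X.Adj a b → ε a ≠ ε b)
    (haut : ∀ a b, X.Adj (α a) (α b) ↔ X.Adj a b) (hodd : ∀ x, ε (α x) ≠ ε x) {a b : V}
    (hab : ε a ≠ ε b) :
    (quotGraph X α hinv hns).Adj (Quotient.mk _ a) (Quotient.mk _ b) ↔ X.Adj a b := by
  rw [adj_mk_mk_iff haut, or_iff_left]
  -- `α b` has the colour of `a`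
  exact fun h => hbip a (α b) h (Fin.two_eq_of_ne_of_ne hab (hodd b).symm)

lemma liftPerm_mem_graphAut_iff (hbip : ∀ a b, X.Adj a b → ε a ≠ ε b)
    (haut : ∀ a b, X.Adj (α a) (α b) ↔ X.Adj a b) (hodd : ∀ x, ε (α x) ≠ ε x)
    (σ : Equiv.Perm (Quotient (orbitSetoid α hinv))) :
    liftPerm hinv hodd σ ∈ graphAut X ↔ σ ∈ graphAut (quotGraph X α hinv hns) := by
  have key : ∀ a b, ε a ≠ ε b →
      (X.Adj (liftPerm hinv hodd σ a) (liftPerm hinv hodd σ b) ↔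
        (quotGraph X α hinv hns).Adj (σ (Quotient.mk _ a)) (σ (Quotient.mk _ b))) := by
    intro a b hab
    rw [← mk_liftPerm_apply hodd, ← mk_liftPerm_apply hodd,
      adj_mk_mk_iff_of_color_ne hbip haut hodd]
    rwa [color_liftPerm_apply hodd, color_liftPerm_apply hodd]
  constructor
  · intro hlift q r
    induction q, r using Quotient.inductionOn₂ with
    | _ a b =>
      obtain ⟨b', hb', hb'color⟩ := exists_mk_eq_color_eq (hinv := hinv) hodd b (ε (α a))
      have hab' : ε a ≠ ε b' := hb'color ▸ (hodd a).symm
      rw [← hb', ← key a b' hab', hlift, adj_mk_mk_iff_of_color_ne hbip haut hodd hab']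
  · intro hσ a b
    by_cases hab : ε a = ε b
    · refine iff_of_false (fun h => hbip _ _ h ?_) (fun h => hbip _ _ h hab)
      rw [color_liftPerm_apply hodd, color_liftPerm_apply hodd, hab]
    · rw [key a b hab, hσ, adj_mk_mk_iff_of_color_ne hbip haut hodd hab]

lemma map_graphAut_liftPerm (hbip : ∀ a b, X.Adj a b → ε a ≠ ε b)
    (haut : ∀ a b, X.Adj (α a) (α b) ↔ X.Adj a b) (hodd : ∀ x, ε (α x) ≠ ε x) :
    (graphAut (quotGraph X α hinv hns)).map (liftPerm hinv hodd) =
      graphAut X ⊓ evenSubgroup ε ⊓ Subgroup.centralizer {α} := by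
  ext π
  rw [inf_assoc, Subgroup.mem_inf, ← range_liftPerm (hinv := hinv) hodd, Subgroup.mem_map,
    MonoidHom.mem_range]
  constructor
  · rintro ⟨σ, hσ, rfl⟩
    exact ⟨(liftPerm_mem_graphAut_iff hbip haut hodd σ).mpr hσ, σ, rfl⟩
  · rintro ⟨hπ, σ, rfl⟩
    exact ⟨σ, (liftPerm_mem_graphAut_iff hbip haut hodd σ).mp hπ, rfl⟩

end quotGraph

/-- for an odd involution `α` of a bigraph `X` with simple quotient, the
automorphism group of `X/α` is isomorphic to the subgroup of `Aut(X)` of even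
automorphisms commuting with `α`. -/
theorem aut_quotGraph_iso {V : Type*} (X : SimpleGraph V) (ε : V → Fin 2)
    (hε : ∀ a b, X.Adj a b → ε a ≠ ε b)
    (α : Equiv.Perm V) (hαaut : ∀ a b, X.Adj (α a) (α b) ↔ X.Adj a b)
    (hαinv : ∀ x, α (α x) = x) (hαodd : ∀ x, ε (α x) ≠ ε x)
    (hαns : ∀ x, ¬ X.Adj x (α x)) :
    Nonempty ((graphAut (quotGraph X α hαinv hαns)) ≃*
      ((graphAut X ⊓ evenSubgroup ε ⊓ Subgroup.centralizer {α}) :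
        Subgroup (Equiv.Perm V))) :=
  ⟨((graphAut _).equivMapOfInjective _ (orbitSetoid.liftPerm_injective hαodd)).trans
    (MulEquiv.subgroupCongr (quotGraph.map_graphAut_liftPerm hε hαaut hαodd))⟩
end

section
/- Let n, k be integers with n > 2k and k ≥ 1. Then every automorphism of the bipartite Kneser graph H(n,k) = K_2 × K(n,k) is of the form c × f for a unique automorphism c of K_2 and a unique automorphism f of K(n,k); that is, the natural monomorphism Z_2 × Aut(K(n,k)) → Aut(H(n,k)), (c,f) ↦ c × f, is a group isomorphism. In particular, Aut(H(n,k)) is isomorphic to Z_2 × S_n. -/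
/-- The involution on `ℕ` swapping `2j ↔ 2j+1` for `j < i`. -/
def sigmaNat (i : ℕ) (x : ℕ) : ℕ :=
  if x < 2 * i then (if x % 2 = 0 then x + 1 else x - 1) else x

lemma sigmaNat_invol (i : ℕ) : Function.Involutive (sigmaNat i) := by
  intro x; unfold sigmaNat; split_ifs <;> omega

/-- `sigmaNat` restricted to `Fin n` (the identity in the out-of-range degenerate case,
which never occurs when `2 * i ≤ n`). -/
def sigmaFinFun (n i : ℕ) (x : Fin n) : Fin n :=
  if h : sigmaNat i x.val < n then ⟨sigmaNat i x.val, h⟩ else x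

lemma sigmaFinFun_invol (n i : ℕ) : Function.Involutive (sigmaFinFun n i) := by
  intro x
  unfold sigmaFinFun
  by_cases h : sigmaNat i x.val < n
  · rw [dif_pos h]
    have h2 : sigmaNat i ((⟨sigmaNat i x.val, h⟩ : Fin n) : ℕ) < n := by
      show sigmaNat i (sigmaNat i x.val) < n
      rw [sigmaNat_invol]; exact x.isLt
    rw [dif_pos h2]
    ext
    exact sigmaNat_invol i x.val
  · rw [dif_neg h, dif_neg h]

/-- The permutation `σ_i = (1 2)(3 4)⋯(2i-1 2i)` of `[n]`, in `0`-indexed form on `Fin n`: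
it swaps `2j ↔ 2j+1` for `j < i` and fixes everything else (assuming `2 * i ≤ n`). -/
def sigmaPerm (n i : ℕ) : Equiv.Perm (Fin n) :=
  Function.Involutive.toPerm _ (sigmaFinFun_invol n i)

/-- The Kneser graph `K(n,k)`: vertices are the `k`-subsets of `[n]`, two subsets being
adjacent iff they are disjoint. -/
def kneserGraph (n k : ℕ) : SimpleGraph {s : Finset (Fin n) // s.card = k} where
  Adj v w := v ≠ w ∧ Disjoint v.1 w.1
  symm := ⟨fun _ _ h => ⟨h.1.symm, h.2.symm⟩⟩
  loopless := ⟨fun _ h => h.1 rfl⟩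

/-- The Kronecker cover `K₂ × G`: vertex set `{0,1} × V(G)`, with `(a,v)` adjacent to
`(b,w)` iff `a ≠ b` and `v` is adjacent to `w` in `G`. -/
def kroneckerCover {V : Type*} (G : SimpleGraph V) : SimpleGraph (Fin 2 × V) where
  Adj x y := x.1 ≠ y.1 ∧ G.Adj x.2 y.2
  symm := ⟨fun _ _ h => ⟨h.1.symm, h.2.symm⟩⟩
  loopless := ⟨fun _ h => h.1 rfl⟩

/-!
An automorphism `π` of `K₂ × K(n, k)` keeps each layer `{a} × V` inside one layer, because any
two `k`-sets are joined by a chain of pairs with a common neighbour; so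
`π (a, A) = (c a, f_a A)` with `A, B` disjoint iff `f₀ A, f₁ B` are. The number of `k`-sets
disjoint from `A ∪ B` is `(n - #(A ∪ B)).choose k`, so `f₀` preserves adjacency in the Johnson
graph `J(n, k)`. Going down the levels `j = k, …, 1`, the clique `{S ∪ {a} | a ∉ S}` of
`J(n, j + 1)` attached to a `j`-set `S` has `n - j > j + 2` members and is therefore sent to a
clique of the same kind; this defines the action of `f₀` on `j`-sets, and at `j = 1` a
permutation of `[n]` inducing `f₀`. Finally, a `k`-set is determined by the `k`-sets disjoint
from it, which forces `f₁ = f₀`.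
-/

open Finset Equiv

theorem Nat.choose_lt_choose_left {a b r : ℕ} (hr : 0 < r) (ha : r ≤ a) (hab : a < b) :
    a.choose r < b.choose r := by
  induction b, hab using Nat.le_induction with
  | base =>
    show a.choose r < (a + 1).choose r
    have := Nat.choose_succ_left a r hr
    have := Nat.choose_pos (n := a) (k := r - 1) (by omega)
    omega
  | succ b hb ih =>
    show a.choose r < (b + 1).choose r
    have := Nat.choose_succ_left b r hr
    omega

theorem Nat.eq_of_choose_eq_choose {m m' r : ℕ} (hr : 0 < r) (hm : r ≤ m)
    (h : m.choose r = m'.choose r) : m = m' := by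
  have hm' : r ≤ m' := by
    by_contra h'
    rw [Nat.choose_eq_zero_of_lt (by omega : m' < r)] at h
    exact (Nat.choose_pos hm).ne' h
  rcases lt_trichotomy m m' with hlt | rfl | hlt
  · exact absurd h (Nat.choose_lt_choose_left hr hm hlt).ne
  · rfl
  · exact absurd h (Nat.choose_lt_choose_left hr hm' hlt).ne'

lemma prodCongr_eq_prodCongr_iff {α β : Type*} [Nonempty α] [Nonempty β] {e e' : Perm α}
    {f f' : Perm β} : prodCongr e f = prodCongr e' f' ↔ e = e' ∧ f = f' := by
  refine ⟨fun h => ?_, by rintro ⟨rfl, rfl⟩; rfl⟩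
  obtain ⟨a₀⟩ := ‹Nonempty α›
  obtain ⟨b₀⟩ := ‹Nonempty β›
  exact ⟨Equiv.ext fun a => congrArg Prod.fst (congrFun (congrArg DFunLike.coe h) (a, b₀)),
    Equiv.ext fun b => congrArg Prod.snd (congrFun (congrArg DFunLike.coe h) (a₀, b))⟩

section KSubsets

variable {α : Type*} {k : ℕ}

lemma kSubset_subset_iff {A B : {s : Finset α // #s = k}} : A.1 ⊆ B.1 ↔ A = B :=
  ⟨fun h => Subtype.ext (eq_of_subset_of_card_le h (by rw [A.2, B.2])), fun h => h ▸ subset_rfl⟩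

variable (k) in
def kSubsetPerm : Perm α →* Perm {s : Finset α // #s = k} where
  toFun σ := σ.finsetCongr.subtypeEquiv fun s => by simp
  map_one' := by ext A : 2; simp [Perm.one_def]
  map_mul' σ τ := by ext A : 2; simp [Perm.mul_def, trans_toEmbedding]

@[simp]
lemma kSubsetPerm_apply_coe (σ : Perm α) (A : {s : Finset α // #s = k}) :
    (kSubsetPerm k σ A : Finset α) = A.1.map σ.toEmbedding := rfl

variable [Fintype α] [DecidableEq α]

lemma card_kSubsets_disjoint (X : Finset α) :
    Fintype.card {C : {s : Finset α // #s = k} // Disjoint C.1 X} =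
      (Fintype.card α - #X).choose k := by
  rw [Fintype.card_congr (subtypeSubtypeEquivSubtypeInter (fun s : Finset α => #s = k)
    (fun s => Disjoint s X)), Fintype.card_subtype, ← card_compl, ← card_powersetCard]
  congr 1
  ext s
  simp [subset_compl_iff_disjoint_right, and_comm]

lemma card_kSubsets_superset (hk : k ≤ Fintype.card α) (X : Finset α) :
    Fintype.card {A : {s : Finset α // #s = k} // X ⊆ A.1} =
      (Fintype.card α - #X).choose (Fintype.card α - k) := by
  rw [← card_kSubsets_disjoint]
  refine Fintype.card_congr (subtypeEquiv (subtypeEquiv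
    (Function.Involutive.toPerm _ compl_involutive) fun s => ?_)
      fun A => disjoint_compl_left_iff.symm)
  simp only [Function.Involutive.coe_toPerm, card_compl]
  have := card_le_univ s
  omega

lemma exists_kSubset_superset_disjoint {S X : Finset α} (hSX : Disjoint S X) (hS : #S ≤ k)
    (hX : k + #X ≤ Fintype.card α) :
    ∃ C : {s : Finset α // #s = k}, S ⊆ C.1 ∧ Disjoint C.1 X := by
  obtain ⟨C, hSC, hCX, hC⟩ := exists_subsuperset_card_eq
    (subset_compl_iff_disjoint_right.mpr hSX) hS (by rw [card_compl]; omega)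
  exact ⟨⟨C, hC⟩, hSC, subset_compl_iff_disjoint_right.mp hCX⟩

lemma subset_of_forall_kSubset_superset {R R' : Finset α} (hR : #R ≤ k)
    (hk : k < Fintype.card α) (h : ∀ A : {s : Finset α // #s = k}, R ⊆ A.1 → R' ⊆ A.1) :
    R' ⊆ R := by
  intro x hxR'
  by_contra hxR
  obtain ⟨A, hRA, hAx⟩ := exists_kSubset_superset_disjoint (disjoint_singleton_right.mpr hxR)
    hR (by rw [card_singleton]; omega)
  exact disjoint_singleton_right.mp hAx (h A hRA hxR')

lemma subset_of_forall_kSubset_disjoint {X Y : Finset α} (hk₀ : 1 ≤ k)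
    (hY : k + #Y ≤ Fintype.card α)
    (h : ∀ C : {s : Finset α // #s = k}, Disjoint C.1 Y → Disjoint C.1 X) : X ⊆ Y := by
  intro x hxX
  by_contra hxY
  obtain ⟨C, hxC, hCY⟩ := exists_kSubset_superset_disjoint (disjoint_singleton_left.mpr hxY)
    (by rwa [card_singleton]) hY
  exact disjoint_left.mp (h C hCY) (singleton_subset_iff.mp hxC) hxX

lemma kSubsetPerm_injective (hk₀ : 1 ≤ k) (hk : k < Fintype.card α) :
    Function.Injective (kSubsetPerm (α := α) k) := by
  refine (injective_iff_map_eq_one _).mpr fun σ hσ => Equiv.ext fun x => ?_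
  have hfix : ∀ A : {s : Finset α // #s = k}, A.1.map σ.toEmbedding = A.1 := fun A => by
    rw [← kSubsetPerm_apply_coe, hσ]; rfl
  have : ({σ x} : Finset α) ⊆ {x} :=
    subset_of_forall_kSubset_superset (R := {x}) (by simpa using hk₀) hk fun A hA => by
      rw [singleton_subset_iff] at hA ⊢
      rw [← hfix A]
      exact mem_map_of_mem σ.toEmbedding hA
  simpa using this

end KSubsets

section JohnsonCliques

variable {α : Type*} [DecidableEq α] {j : ℕ}

lemma union_eq_insert_of_card_union {T T' : Finset α} {d : α} (hd : d ∈ T') (hdT : d ∉ T)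
    (h : #(T ∪ T') = #T + 1) : T ∪ T' = insert d T :=
  (eq_of_subset_of_card_le (insert_subset (mem_union_right _ hd) subset_union_left)
    (by rw [card_insert_of_notMem hdT, h])).symm

lemma subset_union_of_not_inter_subset {T T₁ T₂ : Finset α} (hT : #T = j + 1)
    (h₁ : #(T ∪ T₁) = j + 2) (h₂ : #(T ∪ T₂) = j + 2) (h₁₂ : #(T₁ ∪ T₂) = j + 2)
    (hD : ¬T₁ ∩ T₂ ⊆ T) : T ⊆ T₁ ∪ T₂ := by
  obtain ⟨d, hd, hdT⟩ := not_subset.mp hD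
  rw [mem_inter] at hd
  have e₁ := union_eq_insert_of_card_union hd.1 hdT (by omega)
  have e₂ := union_eq_insert_of_card_union hd.2 hdT (by omega)
  have hsub : T₁ ∪ T₂ ⊆ insert d T :=
    union_subset (e₁ ▸ subset_union_right) (e₂ ▸ subset_union_right)
  rw [eq_of_subset_of_card_le hsub (by rw [card_insert_of_notMem hdT]; omega)]
  exact subset_insert _ _

/-- A clique of the Johnson graph `J(n, j + 1)` lies in a star `{T | D ⊆ T}` with `#D = j` or
in `powersetCard (j + 1) U` with `#U = j + 2`, and the latter has only `j + 2` members. -/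
theorem exists_subset_forall_of_pairwise_card_union (𝓕 : Finset (Finset α))
    (hcard : ∀ T ∈ 𝓕, #T = j + 1)
    (hunion : ∀ T ∈ 𝓕, ∀ T' ∈ 𝓕, T ≠ T' → #(T ∪ T') = j + 2) (hbig : j + 2 < #𝓕) :
    ∃ D : Finset α, #D = j ∧ ∀ T ∈ 𝓕, D ⊆ T := by
  have hinter : ∀ T ∈ 𝓕, ∀ T' ∈ 𝓕, T ≠ T' → #(T ∩ T') = j := fun T hT T' hT' hne => by
    have := card_union_add_card_inter T T'
    rw [hunion T hT T' hT' hne, hcard T hT, hcard T' hT'] at this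
    omega
  obtain ⟨T₁, h₁, T₂, h₂, h₁₂⟩ := one_lt_card.mp (by omega : 1 < #𝓕)
  refine ⟨T₁ ∩ T₂, hinter T₁ h₁ T₂ h₂ h₁₂, ?_⟩
  by_contra! ⟨T₀, h₀, hD₀⟩
  have hT₀₁ : T₀ ≠ T₁ := fun h => hD₀ (h ▸ inter_subset_left)
  have hT₀₂ : T₀ ≠ T₂ := fun h => hD₀ (h ▸ inter_subset_right)
  have hT₀U : T₀ ⊆ T₁ ∪ T₂ := subset_union_of_not_inter_subset (hcard T₀ h₀)
    (hunion T₀ h₀ T₁ h₁ hT₀₁) (hunion T₀ h₀ T₂ h₂ hT₀₂) (hunion T₁ h₁ T₂ h₂ h₁₂) hD₀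
  obtain ⟨d, hd, hdT₀⟩ := not_subset.mp hD₀
  have hsub : ∀ T ∈ 𝓕, T ⊆ T₁ ∪ T₂ := by
    intro T hT
    rcases eq_or_ne T T₁ with rfl | hT₁
    · exact subset_union_left
    rcases eq_or_ne T T₂ with rfl | hT₂
    · exact subset_union_right
    by_cases hDT : T₁ ∩ T₂ ⊆ T
    swap
    · exact subset_union_of_not_inter_subset (hcard T hT) (hunion T hT T₁ h₁ hT₁)
        (hunion T hT T₂ h₂ hT₂) (hunion T₁ h₁ T₂ h₂ h₁₂) hDT
    -- otherwise `T` meets `T₁ ∪ T₂` exactly in `T₁ ∩ T₂`, so it meets `T₀` in too few points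
    exfalso
    have hTi : ∀ T' ∈ 𝓕, T ≠ T' → T₁ ∩ T₂ ⊆ T' → T ∩ T' = T₁ ∩ T₂ := fun T' hT' hne hDT' =>
      (eq_of_subset_of_card_le (subset_inter hDT hDT')
        (by rw [hinter T hT T' hT' hne, hinter T₁ h₁ T₂ h₂ h₁₂])).symm
    have hTT₀ : T ∩ T₀ ⊆ (T₁ ∩ T₂).erase d := by
      intro x hx
      rw [mem_inter] at hx
      refine mem_erase.mpr ⟨ne_of_mem_of_not_mem hx.2 hdT₀, ?_⟩
      rcases mem_union.mp (hT₀U hx.2) with hx' | hx'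
      · rw [← hTi T₁ h₁ hT₁ inter_subset_left]; exact mem_inter.mpr ⟨hx.1, hx'⟩
      · rw [← hTi T₂ h₂ hT₂ inter_subset_right]; exact mem_inter.mpr ⟨hx.1, hx'⟩
    have := card_le_card hTT₀
    rw [card_erase_of_mem hd, hinter T₁ h₁ T₂ h₂ h₁₂,
      hinter T hT T₀ h₀ (fun h => hD₀ (h ▸ hDT))] at this
    have := card_pos.mpr ⟨d, hd⟩
    rw [hinter T₁ h₁ T₂ h₂ h₁₂] at this
    omega
  have hle := card_le_card fun T hT => mem_powersetCard.mpr ⟨hsub T hT, hcard T hT⟩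
  rw [card_powersetCard, hunion T₁ h₁ T₂ h₂ h₁₂, Nat.choose_succ_self_right] at hle
  omega

end JohnsonCliques

section LevelMaps

variable {α : Type*} {k : ℕ}

/-- `ρ` is the action of `f` on `j`-subsets, as seen through inclusion in `k`-subsets. -/
def IsLevelMap (f : Perm {s : Finset α // #s = k}) (j : ℕ) (ρ : Finset α → Finset α) : Prop :=
  ∀ R : Finset α, #R = j → #(ρ R) = j ∧ ∀ A : {s : Finset α // #s = k}, R ⊆ A.1 ↔ ρ R ⊆ (f A).1

/-- Two `j`-sets are adjacent in the Johnson graph `J(n, j)` iff their union has `j + 1`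
elements. -/
def PreservesJohnsonAdj [DecidableEq α] (j : ℕ) (ρ : Finset α → Finset α) : Prop :=
  ∀ R₁ R₂ : Finset α, #R₁ = j → #R₂ = j → #(R₁ ∪ R₂) = j + 1 → #(ρ R₁ ∪ ρ R₂) = j + 1

variable {j : ℕ} {f : Perm {s : Finset α // #s = k}} {ρ : Finset α → Finset α}

lemma isLevelMap_top (f : Perm {s : Finset α // #s = k}) :
    IsLevelMap f k fun R => if h : #R = k then (f ⟨R, h⟩).1 else R := by
  intro R hR
  simp only [dif_pos hR]
  exact ⟨(f ⟨R, hR⟩).2, fun A => (kSubset_subset_iff (A := ⟨R, hR⟩) (B := A)).trans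
    (f.apply_eq_iff_eq.symm.trans kSubset_subset_iff.symm)⟩

namespace IsLevelMap

lemma apply_eq (hρ : IsLevelMap f k ρ) {R : Finset α} (hR : #R = k) : ρ R = (f ⟨R, hR⟩).1 :=
  eq_of_subset_of_card_le ((hρ R hR).2 ⟨R, hR⟩ |>.mp subset_rfl)
    (by rw [(f _).2, (hρ R hR).1])

lemma preservesJohnsonAdj_top [DecidableEq α] (hρ : IsLevelMap f k ρ)
    (hf : ∀ A B : {s : Finset α // #s = k},
      #(A.1 ∪ B.1) = k + 1 → #((f A).1 ∪ (f B).1) = k + 1) :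
    PreservesJohnsonAdj k ρ := fun R₁ R₂ h₁ h₂ hu => by
  rw [hρ.apply_eq h₁, hρ.apply_eq h₂]
  exact hf ⟨R₁, h₁⟩ ⟨R₂, h₂⟩ hu

variable [Fintype α] [DecidableEq α]

lemma injOn (hρ : IsLevelMap f j ρ) (hj : j ≤ k) (hk : k < Fintype.card α) :
    Set.InjOn ρ {R | #R = j} := by
  intro R₁ h₁ R₂ h₂ he
  have h₂₁ : R₂ ⊆ R₁ := subset_of_forall_kSubset_superset (by rw [h₁]; exact hj) hk
    fun A hA => by rw [(hρ R₂ h₂).2, ← he, ← (hρ R₁ h₁).2]; exact hA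
  exact (eq_of_subset_of_card_le h₂₁ (by rw [h₁, h₂])).symm

/-- The `k`-supersets of `R₁ ∪ R₂` correspond under `f` to those of `ρ R₁ ∪ ρ R₂`, and their
number `(n - #X).choose (n - k)` determines `#X`. -/
lemma card_union (hρ : IsLevelMap f j ρ) (hk : k < Fintype.card α) {R₁ R₂ : Finset α}
    (h₁ : #R₁ = j) (h₂ : #R₂ = j) (hu : #(R₁ ∪ R₂) ≤ k) : #(ρ R₁ ∪ ρ R₂) = #(R₁ ∪ R₂) := by
  have hcount := Fintype.card_congr <| subtypeEquiv
    (p := fun A : {s : Finset α // #s = k} => R₁ ∪ R₂ ⊆ A.1)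
    (q := fun A => ρ R₁ ∪ ρ R₂ ⊆ A.1) f fun A => by
      rw [union_subset_iff, union_subset_iff, (hρ R₁ h₁).2, (hρ R₂ h₂).2]
  rw [card_kSubsets_superset hk.le, card_kSubsets_superset hk.le] at hcount
  have := Nat.eq_of_choose_eq_choose (by omega) (by omega) hcount
  have := card_le_univ (ρ R₁ ∪ ρ R₂)
  omega

lemma preservesJohnsonAdj (hρ : IsLevelMap f j ρ) (hjk : j < k) (hk : k < Fintype.card α) :
    PreservesJohnsonAdj j ρ := fun R₁ R₂ h₁ h₂ hu => by
  rw [hρ.card_union hk h₁ h₂ (by omega), hu]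

lemma card_image_insert (hρ : IsLevelMap f (j + 1) ρ) (hjk : j + 1 ≤ k)
    (hk : k < Fintype.card α) {S : Finset α} (hS : #S = j) :
    #(Sᶜ.image fun a => ρ (insert a S)) = Fintype.card α - j := by
  rw [card_image_of_injOn, card_compl, hS]
  intro a ha b hb hab
  have ha' := mem_compl.mp ha
  refine (insert_inj ha').mp (hρ.injOn hjk hk ?_ ?_ hab)
  · exact (card_insert_of_notMem ha').trans (congrArg (· + 1) hS)
  · exact (card_insert_of_notMem (mem_compl.mp hb)).trans (congrArg (· + 1) hS)

/-- The sets `ρ (insert a S)`, `a ∉ S`, form a clique of size `n - j > j + 2` in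
`J(n, j + 1)`. -/
lemma exists_subset_forall_insert (hρ : IsLevelMap f (j + 1) ρ)
    (hadj : PreservesJohnsonAdj (j + 1) ρ) (hjk : j + 1 ≤ k) (hk : 2 * k < Fintype.card α)
    {S : Finset α} (hS : #S = j) : ∃ D : Finset α, #D = j ∧ ∀ a ∉ S, D ⊆ ρ (insert a S) := by
  have hins : ∀ a ∉ S, #(insert a S) = j + 1 := fun a ha => by
    rw [card_insert_of_notMem ha, hS]
  set 𝓕 := Sᶜ.image fun a => ρ (insert a S) with h𝓕
  have hbig : #𝓕 = Fintype.card α - j := hρ.card_image_insert hjk (by omega) hS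
  have hcard : ∀ T ∈ 𝓕, #T = j + 1 := by
    simp only [h𝓕, forall_mem_image, mem_compl]
    exact fun a ha => (hρ _ (hins a ha)).1
  have hunion : ∀ T ∈ 𝓕, ∀ T' ∈ 𝓕, T ≠ T' → #(T ∪ T') = j + 2 := by
    simp only [h𝓕, forall_mem_image, mem_compl]
    intro a ha b hb hne
    have hab : a ≠ b := by rintro rfl; exact hne rfl
    refine hadj _ _ (hins a ha) (hins b hb) ?_
    rw [insert_union, union_insert, union_self, card_insert_of_notMem, hins b hb]
    exact fun h => (mem_insert.mp h).elim hab ha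
  obtain ⟨D, hD, hDT⟩ := exists_subset_forall_of_pairwise_card_union 𝓕 hcard hunion (by omega)
  exact ⟨D, hD, fun a ha => hDT _ (mem_image_of_mem _ (mem_compl.mpr ha))⟩

/-- Both sides consist of `n - j` distinct `j + 1`-supersets of `D`. -/
lemma image_insert_eq (hρ : IsLevelMap f (j + 1) ρ) (hjk : j + 1 ≤ k)
    (hk : k < Fintype.card α) {S D : Finset α} (hS : #S = j) (hD : #D = j)
    (hDS : ∀ a ∉ S, D ⊆ ρ (insert a S)) :
    Sᶜ.image (fun a => ρ (insert a S)) = Dᶜ.image (insert · D) := by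
  refine eq_of_subset_of_card_le (fun T hT => ?_) ?_
  · obtain ⟨a, ha, rfl⟩ := mem_image.mp hT
    have ha := mem_compl.mp ha
    obtain ⟨x, hx, hxT⟩ := exists_eq_insert_iff.mpr
      ⟨hDS a ha, by rw [(hρ _ (by rw [card_insert_of_notMem ha, hS])).1, hD]⟩
    exact mem_image.mpr ⟨x, mem_compl.mpr hx, hxT⟩
  · rw [hρ.card_image_insert hjk hk hS, ← hD, ← card_compl]
    exact card_image_le

lemma exists_isLevelMap_of_succ (hρ : IsLevelMap f (j + 1) ρ)
    (hadj : PreservesJohnsonAdj (j + 1) ρ) (hjk : j + 1 ≤ k) (hk : 2 * k < Fintype.card α) :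
    ∃ ρ', IsLevelMap f j ρ' := by
  choose! ρ' hρ'card hρ'sub using fun S (hS : #S = j) =>
    hρ.exists_subset_forall_insert hadj hjk hk hS
  refine ⟨ρ', fun S hS => ⟨hρ'card S hS, fun A => ⟨fun hSA => ?_, fun hDA => ?_⟩⟩⟩
  · obtain ⟨a, haA, haS⟩ := not_subset.mp fun h : A.1 ⊆ S => by
      have := card_le_card h; rw [A.2, hS] at this; omega
    exact (hρ'sub S hS a haS).trans
      (((hρ _ (by rw [card_insert_of_notMem haS, hS])).2 A).mp (insert_subset haA hSA))
  · obtain ⟨x, hxA, hxD⟩ := not_subset.mp fun h : (f A).1 ⊆ ρ' S => by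
      have := card_le_card h; rw [(f A).2, hρ'card S hS] at this; omega
    have hx : insert x (ρ' S) ∈ Sᶜ.image fun a => ρ (insert a S) := by
      rw [hρ.image_insert_eq hjk (by omega) hS (hρ'card S hS) (hρ'sub S hS)]
      exact mem_image_of_mem _ (mem_compl.mpr hxD)
    obtain ⟨a, ha, he⟩ := mem_image.mp hx
    have hsub := ((hρ _ (by rw [card_insert_of_notMem (mem_compl.mp ha), hS])).2 A).mpr
      (he ▸ insert_subset hxA hDA)
    exact (subset_insert a S).trans hsub

lemma exists_kSubsetPerm_eq (hρ : IsLevelMap f 1 ρ) (hk₀ : 1 ≤ k) (hk : k < Fintype.card α) :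
    ∃ σ : Perm α, kSubsetPerm k σ = f := by
  choose τ hτ using fun x => card_eq_one.mp (hρ {x} (card_singleton x)).1
  have hmem : ∀ x (A : {s : Finset α // #s = k}), x ∈ A.1 ↔ τ x ∈ (f A).1 := fun x A => by
    simpa [hτ, singleton_subset_iff] using (hρ {x} (card_singleton x)).2 A
  have hτinj : Function.Injective τ := fun x y hxy => singleton_injective <|
    hρ.injOn hk₀ hk (card_singleton x) (card_singleton y) (by rw [hτ, hτ, hxy])
  let σ : Perm α := ofBijective τ (Finite.injective_iff_bijective.mp hτinj)
  refine ⟨σ, Equiv.ext fun A => Subtype.ext <| ext fun y => ?_⟩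
  rw [kSubsetPerm_apply_coe, mem_map_equiv, hmem]
  show σ (σ.symm y) ∈ (f A).1 ↔ y ∈ (f A).1
  rw [σ.apply_symm_apply]

end IsLevelMap

theorem exists_kSubsetPerm_eq_of_card_union [Fintype α] [DecidableEq α] (hk₀ : 1 ≤ k)
    (hk : 2 * k < Fintype.card α) (f : Perm {s : Finset α // #s = k})
    (hf : ∀ A B : {s : Finset α // #s = k},
      #(A.1 ∪ B.1) = k + 1 → #((f A).1 ∪ (f B).1) = k + 1) :
    ∃ σ : Perm α, kSubsetPerm k σ = f := by
  have hlevel : ∀ j ≤ k, 1 ≤ j → ∃ ρ, IsLevelMap f j ρ := by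
    intro j hj
    refine Nat.decreasingInduction (motive := fun j _ => 1 ≤ j → ∃ ρ, IsLevelMap f j ρ)
      (fun j hjk ih hj => ?_) (fun _ => ⟨_, isLevelMap_top f⟩) hj
    obtain ⟨ρ, hρ⟩ := ih (by omega)
    refine hρ.exists_isLevelMap_of_succ ?_ hjk hk
    rcases Nat.lt_or_ge (j + 1) k with hlt | hge
    · exact hρ.preservesJohnsonAdj hlt (by omega)
    · obtain rfl : j + 1 = k := by omega
      exact hρ.preservesJohnsonAdj_top hf
  obtain ⟨ρ, hρ⟩ := hlevel 1 hk₀ le_rfl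
  exact hρ.exists_kSubsetPerm_eq hk₀ (by omega)

end LevelMaps

def PreservesDisjoint {α : Type*} {k : ℕ} (f g : Perm {s : Finset α // #s = k}) : Prop :=
  ∀ A B : {s : Finset α // #s = k}, Disjoint (f A).1 (g B).1 ↔ Disjoint A.1 B.1

namespace PreservesDisjoint

variable {α : Type*} [Fintype α] [DecidableEq α] {k : ℕ} {f g : Perm {s : Finset α // #s = k}}

/-- `g` maps the `k`-sets disjoint from `A ∪ B` onto those disjoint from `f A ∪ f B`, and
their number `(n - #X).choose k` determines `#X`. -/
lemma card_union_eq (hfg : PreservesDisjoint f g) (hk₀ : 1 ≤ k) (hk : 2 * k < Fintype.card α)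
    {A B : {s : Finset α // #s = k}} (hAB : #(A.1 ∪ B.1) = k + 1) :
    #((f A).1 ∪ (f B).1) = k + 1 := by
  have hcount := Fintype.card_congr <| subtypeEquiv
    (p := fun C : {s : Finset α // #s = k} => Disjoint C.1 (A.1 ∪ B.1))
    (q := fun C => Disjoint C.1 ((f A).1 ∪ (f B).1)) g fun C => by
      rw [disjoint_comm, disjoint_comm (a := (g C).1)]
      rw [disjoint_union_left, disjoint_union_left, hfg A C, hfg B C]
  rw [card_kSubsets_disjoint, card_kSubsets_disjoint, hAB] at hcount
  have := Nat.eq_of_choose_eq_choose hk₀ (by omega) hcount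
  have := card_le_univ ((f A).1 ∪ (f B).1)
  omega

lemma exists_kSubsetPerm_eq (hfg : PreservesDisjoint f g) (hk₀ : 1 ≤ k)
    (hk : 2 * k < Fintype.card α) : ∃ σ : Perm α, kSubsetPerm k σ = f :=
  exists_kSubsetPerm_eq_of_card_union hk₀ hk f fun _ _ => hfg.card_union_eq hk₀ hk

/-- Once `f` is induced by a permutation, `f B` and `g B` are disjoint from the same
`k`-sets. -/
lemma eq (hfg : PreservesDisjoint f g) (hk₀ : 1 ≤ k) (hk : 2 * k < Fintype.card α) : f = g := by
  obtain ⟨σ, rfl⟩ := hfg.exists_kSubsetPerm_eq hk₀ hk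
  refine Equiv.ext fun B => Subtype.ext <| (eq_of_subset_of_card_le
    (subset_of_forall_kSubset_disjoint hk₀ (by rw [(kSubsetPerm k σ B).2]; omega)
      fun C hC => ?_) (by rw [(g B).2, (kSubsetPerm k σ B).2])).symm
  obtain ⟨A, rfl⟩ := (kSubsetPerm k σ).surjective C
  rw [hfg]
  simpa [disjoint_map] using hC

end PreservesDisjoint

section KroneckerCover

variable {V : Type*} {G : SimpleGraph V}

lemma prodCongr_mem_graphAut_kroneckerCover (c : Perm (Fin 2)) {f : Perm V}
    (hf : f ∈ graphAut G) : prodCongr c f ∈ graphAut (kroneckerCover G) :=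
  fun x y => and_congr c.injective.ne_iff (hf x.2 y.2)

lemma kroneckerCover_fst_eq_of_mem_commonNeighbors {π : Perm (Fin 2 × V)}
    (hπ : π ∈ graphAut (kroneckerCover G)) {u v w : V} (hu : u ∈ G.commonNeighbors v w)
    (a : Fin 2) : (π (a, v)).1 = (π (a, w)).1 := by
  rw [SimpleGraph.mem_commonNeighbors] at hu
  have hv := ((hπ (a, v) (a + 1, u)).mpr ⟨by simp, hu.1⟩).1
  have hw := ((hπ (a, w) (a + 1, u)).mpr ⟨by simp, hu.2⟩).1
  omega

theorem exists_eq_prodCongr_of_mem_graphAut_kroneckerCover [Finite V] [Nonempty V]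
    (hconn : ∀ v w, Relation.ReflTransGen (fun v w => (G.commonNeighbors v w).Nonempty) v w)
    (hstable : ∀ f g : Perm V, (∀ v w, G.Adj (f v) (g w) ↔ G.Adj v w) → f = g)
    {π : Perm (Fin 2 × V)} (hπ : π ∈ graphAut (kroneckerCover G)) :
    ∃ (c : Perm (Fin 2)) (f : Perm V), f ∈ graphAut G ∧ π = prodCongr c f := by
  obtain ⟨v₀⟩ := ‹Nonempty V›
  set c : Fin 2 → Fin 2 := fun a => (π (a, v₀)).1
  have hlayer : ∀ a v, (π (a, v)).1 = c a := fun a v => by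
    induction hconn v v₀ with
    | refl => rfl
    | tail _ hbc ih =>
      exact ih.trans (kroneckerCover_fst_eq_of_mem_commonNeighbors hπ hbc.some_mem a)
  -- if both layers went to the same layer, `π` would miss the other one
  have hc : Function.Injective c := by
    intro a b hab
    by_contra hne
    obtain ⟨⟨a', v⟩, hx⟩ := π.surjective (c a + 1, v₀)
    have hca' : c a' = c a := by
      rcases (by omega : a' = a ∨ a' = b) with rfl | rfl
      exacts [rfl, hab.symm]
    have := congrArg Prod.fst hx
    rw [hlayer, hca'] at this
    dsimp only at this
    omega
  have hF : ∀ a, Function.Injective fun v => (π (a, v)).2 := fun a v w h => by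
    simpa using π.injective (Prod.ext ((hlayer a v).trans (hlayer a w).symm) h)
  let F : Fin 2 → Perm V := fun a => ofBijective _ (Finite.injective_iff_bijective.mp (hF a))
  have hπF : ∀ a v, π (a, v) = (c a, F a v) := fun a v => Prod.ext (hlayer a v) rfl
  have hadj : ∀ v w, G.Adj (F 0 v) (F 1 w) ↔ G.Adj v w := fun v w => by
    simpa [hπF, kroneckerCover, hc.ne] using hπ (0, v) (1, w)
  have hF01 : F 0 = F 1 := hstable _ _ hadj
  refine ⟨ofBijective c (Finite.injective_iff_bijective.mp hc), F 0, fun v w => ?_, ?_⟩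
  · have := hadj v w
    rwa [← hF01] at this
  · ext ⟨a, v⟩ : 1
    fin_cases a
    · exact hπF 0 v
    · rw [hπF, hF01]; rfl

def prodCongrAutHom (G : SimpleGraph V) :
    Perm (Fin 2) × graphAut G →* graphAut (kroneckerCover G) where
  toFun p := ⟨prodCongr p.1 p.2, prodCongr_mem_graphAut_kroneckerCover p.1 p.2.2⟩
  map_one' := rfl
  map_mul' _ _ := rfl

lemma prodCongrAutHom_bijective [Finite V] [Nonempty V]
    (hconn : ∀ v w, Relation.ReflTransGen (fun v w => (G.commonNeighbors v w).Nonempty) v w)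
    (hstable : ∀ f g : Perm V, (∀ v w, G.Adj (f v) (g w) ↔ G.Adj v w) → f = g) :
    Function.Bijective (prodCongrAutHom G) := by
  refine ⟨fun p q h => ?_, fun ⟨π, hπ⟩ => ?_⟩
  · obtain ⟨h₁, h₂⟩ := prodCongr_eq_prodCongr_iff.mp (congrArg Subtype.val h)
    exact Prod.ext h₁ (Subtype.ext h₂)
  · obtain ⟨c, f, hf, rfl⟩ :=
      exists_eq_prodCongr_of_mem_graphAut_kroneckerCover hconn hstable hπ
    exact ⟨(c, ⟨f, hf⟩), rfl⟩

end KroneckerCover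

section KneserGraph

variable {n k : ℕ}

lemma kneserGraph_adj_iff (hk₀ : 1 ≤ k) {A B : {s : Finset (Fin n) // s.card = k}} :
    (kneserGraph n k).Adj A B ↔ Disjoint A.1 B.1 := by
  refine ⟨And.right, fun h => ⟨fun hAB => ?_, h⟩⟩
  subst hAB
  have := A.2
  rw [disjoint_self.mp h, bot_eq_empty, card_empty] at this
  omega

/-- Exchanging an element of `A \ B` for one of `B \ A` gives a `k`-set `A'` with
`#(A ∪ A') = k + 1`, and the `k`-subsets of the complement of `A ∪ A'` are common
neighbours of `A` and `A'`. -/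
lemma kneserGraph_reflTransGen_commonNeighbors (hk₀ : 1 ≤ k) (hk : 2 * k < n)
    (A B : {s : Finset (Fin n) // s.card = k}) :
    Relation.ReflTransGen (fun v w => ((kneserGraph n k).commonNeighbors v w).Nonempty)
      A B := by
  induction hd : #(A.1 \ B.1) using Nat.strong_induction_on generalizing A with
  | _ d ih =>
  rcases (A.1 \ B.1).eq_empty_or_nonempty with h | ⟨x, hx⟩
  · rw [kSubset_subset_iff.mp (sdiff_eq_empty_iff_subset.mp h)]
  obtain ⟨hxA, hxB⟩ := mem_sdiff.mp hx
  obtain ⟨y, hy⟩ : (B.1 \ A.1).Nonempty := by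
    rw [← card_pos, ← card_sdiff_comm (by rw [A.2, B.2]), card_pos]
    exact ⟨x, hx⟩
  obtain ⟨hyB, hyA⟩ := mem_sdiff.mp hy
  have hyA' : y ∉ A.1.erase x := fun h => hyA (mem_of_mem_erase h)
  let A' : {s : Finset (Fin n) // s.card = k} := ⟨insert y (A.1.erase x), by
    rw [card_insert_of_notMem hyA', card_erase_of_mem hxA, A.2]; omega⟩
  have hAA' : A.1 ∪ A'.1 ⊆ insert y A.1 :=
    union_subset (subset_insert _ _) (insert_subset_insert _ (erase_subset _ _))
  obtain ⟨C, -, hC⟩ := exists_kSubset_superset_disjoint (k := k)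
    (disjoint_empty_left (insert y A.1)) (by simp)
    (by rw [card_insert_of_notMem hyA, A.2, Fintype.card_fin]; omega)
  have hcommon : C ∈ (kneserGraph n k).commonNeighbors A A' := by
    rw [SimpleGraph.mem_commonNeighbors, kneserGraph_adj_iff hk₀, kneserGraph_adj_iff hk₀]
    exact ⟨(hC.mono_right (subset_union_left.trans hAA')).symm,
      (hC.mono_right (subset_union_right.trans hAA')).symm⟩
  refine .head ⟨C, hcommon⟩ (ih _ ?_ A' rfl)
  have hsub : A'.1 \ B.1 ⊆ (A.1 \ B.1).erase x := by
    intro z hz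
    obtain ⟨hzA', hzB⟩ := mem_sdiff.mp hz
    obtain rfl | hz' := mem_insert.mp hzA'
    · exact absurd hyB hzB
    · exact mem_erase.mpr ⟨ne_of_mem_erase hz', mem_sdiff.mpr ⟨mem_of_mem_erase hz', hzB⟩⟩
  have := card_le_card hsub
  rw [card_erase_of_mem hx, hd] at this
  have := card_pos.mpr ⟨x, hx⟩
  omega

lemma preservesDisjoint_iff_kneserGraph (hk₀ : 1 ≤ k)
    {f g : Perm {s : Finset (Fin n) // s.card = k}} : PreservesDisjoint f g ↔
      ∀ A B, (kneserGraph n k).Adj (f A) (g B) ↔ (kneserGraph n k).Adj A B := by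
  simp only [PreservesDisjoint, kneserGraph_adj_iff hk₀]

lemma kneserGraph_eq_of_adj_iff (hk₀ : 1 ≤ k) (hk : 2 * k < n)
    (f g : Perm {s : Finset (Fin n) // s.card = k})
    (h : ∀ A B, (kneserGraph n k).Adj (f A) (g B) ↔ (kneserGraph n k).Adj A B) : f = g :=
  ((preservesDisjoint_iff_kneserGraph hk₀).mpr h).eq hk₀ (by rwa [Fintype.card_fin])

lemma kSubsetPerm_mem_graphAut (hk₀ : 1 ≤ k) (σ : Perm (Fin n)) :
    kSubsetPerm k σ ∈ graphAut (kneserGraph n k) := fun A B => by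
  simp only [kneserGraph_adj_iff hk₀, kSubsetPerm_apply_coe, disjoint_map]

def kneserAutHom (hk₀ : 1 ≤ k) : Perm (Fin n) →* graphAut (kneserGraph n k) :=
  (kSubsetPerm k).codRestrict _ (kSubsetPerm_mem_graphAut hk₀)

lemma kneserAutHom_bijective (hk₀ : 1 ≤ k) (hk : 2 * k < n) :
    Function.Bijective (kneserAutHom (n := n) hk₀) := by
  have hkn : 2 * k < Fintype.card (Fin n) := by rwa [Fintype.card_fin]
  refine ⟨fun σ τ h => kSubsetPerm_injective hk₀ (by omega) (congrArg Subtype.val h),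
    fun ⟨f, hf⟩ => ?_⟩
  obtain ⟨σ, hσ⟩ :=
    ((preservesDisjoint_iff_kneserGraph hk₀).mpr hf).exists_kSubsetPerm_eq hk₀ hkn
  exact ⟨σ, Subtype.ext hσ⟩

end KneserGraph

/-- Mirafzal: for `n > 2k`, `k ≥ 1`, every automorphism of the bipartite
Kneser graph `H(n,k) = K₂ × K(n,k)` is `c × f` for a unique pair of an automorphism `c`
of `K₂` and an automorphism `f` of `K(n,k)`; in particular
`Aut(H(n,k)) ≅ Z₂ × S_n`. -/
theorem aut_bipartiteKneser (n k : ℕ) (hn : 2 * k < n) (hk : 1 ≤ k) :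
    (∀ π ∈ graphAut (kroneckerCover (kneserGraph n k)),
      ∃! cf : Equiv.Perm (Fin 2) × Equiv.Perm {s : Finset (Fin n) // s.card = k},
        cf.2 ∈ graphAut (kneserGraph n k) ∧ π = Equiv.prodCongr cf.1 cf.2) ∧
    Nonempty ((graphAut (kroneckerCover (kneserGraph n k))) ≃*
      Multiplicative (ZMod 2) × Equiv.Perm (Fin n)) := by
  obtain ⟨s, -, hs⟩ := exists_subset_card_eq (s := (univ : Finset (Fin n))) (n := k)
    (by rw [card_univ, Fintype.card_fin]; omega)
  have : Nonempty {s : Finset (Fin n) // s.card = k} := ⟨⟨s, hs⟩⟩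
  have hconn := kneserGraph_reflTransGen_commonNeighbors hk hn
  have hstable := kneserGraph_eq_of_adj_iff hk hn
  refine ⟨fun π hπ => ?_, ⟨?_⟩⟩
  · obtain ⟨c, f, hf, rfl⟩ :=
      exists_eq_prodCongr_of_mem_graphAut_kroneckerCover hconn hstable hπ
    refine ⟨(c, f), ⟨hf, rfl⟩, fun cf hcf => ?_⟩
    obtain ⟨hc, hf⟩ := prodCongr_eq_prodCongr_iff.mp hcf.2.symm
    exact Prod.ext hc hf
  · exact (MulEquiv.ofBijective _ (prodCongrAutHom_bijective hconn hstable)).symm.trans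
      (MulEquiv.prodCongr
        (mulEquivOfPrimeCardEq (p := 2) (by simp [Fintype.card_perm]) (by simp))
        (MulEquiv.ofBijective _ (kneserAutHom_bijective hk hn)).symm)
end
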